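/- arXiv:math/0611780 — 4 statements merged into one kernel-verified Lean document; each statement's English description precedes it below -/
import Mathlib

section
/- Let G be a finite group and P a subgroup of G that equals its own normalizer, N_G(P) = P. For x ∈ G write f(x) for the number of G-conjugates of P containing x, i.e. f(x) = |{ gPg⁻¹ : g ∈ G, x ∈ gPg⁻¹ }|. Then the number of orbits of the action of P on G by conjugation equals the sum of f(x) over a set of representatives x of the conjugacy classes of G (the function f is constant on conjugacy classes, so this sum is well defined). -/
/-!
Multiplied by `|P|`, both sides count the commuting pairs `(p, g) ∈ P × G`. On the left this is
Burnside's lemma. On the right, `f x * |P| = #{g | g⁻¹ x g ∈ P}`, because the fibres of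
`g ↦ g P g⁻¹` are the cosets `g N_G(P) = g P`; summing over `x ∈ R` and substituting
`p = g⁻¹ x g` gives `∑ p ∈ P, #{g | g p g⁻¹ ∈ R}`, and the `g` sending `p` to the representative
of its class form a coset of the centralizer of `p`.
-/

open MulAction

theorem ConjAct.fixedBy_toConjAct {G : Type*} [Group G] (p : G) :
    fixedBy G (toConjAct p) = (Subgroup.centralizer {p} : Set G) := by
  ext g
  rw [mem_fixedBy, toConjAct_smul, SetLike.mem_coe, Subgroup.mem_centralizer_singleton_iff,
    mul_inv_eq_iff_eq_mul, eq_comm]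

namespace Subgroup

variable {G : Type*} [Group G]

theorem orbit_map_toConjAct (P : Subgroup G) (x : G) :
    orbit (P.map (ConjAct.toConjAct : G ≃* ConjAct G).toMonoidHom) x =
      {y : G | ∃ p ∈ P, y = p * x * p⁻¹} := by
  ext y
  constructor
  · rintro ⟨⟨_, p, hp, rfl⟩, rfl⟩
    exact ⟨p, hp, ConjAct.toConjAct_smul p x⟩
  · rintro ⟨p, hp, rfl⟩
    exact ⟨⟨_, p, hp, rfl⟩, ConjAct.toConjAct_smul p x⟩

theorem card_conj_orbits_mul_card (P : Subgroup G) :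
    Nat.card {O : Set G // ∃ x : G, O = {y : G | ∃ p ∈ P, y = p * x * p⁻¹}} * Nat.card P =
      Nat.card (Σ p : P, centralizer {(p : G)}) := by
  set Q := P.map (ConjAct.toConjAct : G ≃* ConjAct G).toMonoidHom
  let e : P ≃ Q := ((ConjAct.toConjAct : G ≃* ConjAct G).subgroupMap P).toEquiv
  have orbitsEquiv : {O : Set G // ∃ x : G, O = {y : G | ∃ p ∈ P, y = p * x * p⁻¹}} ≃
      orbitRel.Quotient Q G :=
    calc _ ≃ Set.range (orbitRel.Quotient.orbit (G := Q) (α := G)) :=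
          Equiv.subtypeEquivRight fun O => by
            simp_rw [← orbit_map_toConjAct, Set.mem_range]
            constructor
            · rintro ⟨x, rfl⟩
              exact ⟨Quotient.mk'' x, orbitRel.Quotient.orbit_mk x⟩
            · rintro ⟨⟨x⟩, rfl⟩
              exact ⟨x, rfl⟩
      _ ≃ _ := (Equiv.ofInjective _ orbitRel.Quotient.orbit_injective).symm
  have fixedByEquiv : (Σ p : P, centralizer {(p : G)}) ≃ Σ q : Q, fixedBy G q :=
    Equiv.sigmaCongr e fun p => Equiv.setCongr (ConjAct.fixedBy_toConjAct (p : G)).symm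
  rw [Nat.card_congr orbitsEquiv, Nat.card_congr e, ← Nat.card_prod, Nat.card_congr fixedByEquiv]
  exact Nat.card_congr (sigmaFixedByEquivOrbitsProdGroup Q G).symm

theorem mem_map_conj_iff (P : Subgroup G) (g x : G) :
    x ∈ P.map (MulAut.conj g).toMonoidHom ↔ g⁻¹ * x * g ∈ P := by
  rw [mem_map_equiv, MulAut.conj_symm_apply]

theorem map_conj_eq_map_conj_iff (P : Subgroup G) {a b : G} :
    P.map (MulAut.conj a).toMonoidHom = P.map (MulAut.conj b).toMonoidHom ↔
      a⁻¹ * b ∈ normalizer (P : Set G) := by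
  have hb : P.map (MulAut.conj b).toMonoidHom =
      (P.map (MulAut.conj (a⁻¹ * b)).toMonoidHom).map (MulAut.conj a).toMonoidHom := by
    rw [map_map]
    congr 1
    ext x
    simp [mul_assoc]
  rw [mem_normalizer_iff_map_conj_eq, hb, (map_injective (MulAut.conj a).injective).eq_iff,
    eq_comm]
  rfl

def conjOfCoset (P : Subgroup G) : G ⧸ P → Subgroup G :=
  Quotient.lift (fun g => P.map (MulAut.conj g).toMonoidHom) fun _ _ h =>
    (map_conj_eq_map_conj_iff P).2 (le_normalizer (QuotientGroup.leftRel_apply.1 h))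

theorem conjOfCoset_injective {P : Subgroup G} (hP : normalizer (P : Set G) = P) :
    Function.Injective (conjOfCoset P) := by
  rintro ⟨a⟩ ⟨b⟩ h
  exact QuotientGroup.eq.2 (hP ▸ (map_conj_eq_map_conj_iff P).1 h)

theorem card_conjugates_containing_mul_card {P : Subgroup G} (hP : normalizer (P : Set G) = P)
    (x : G) :
    Nat.card {Q : Subgroup G // (∃ g : G, Q = P.map (MulAut.conj g).toMonoidHom) ∧ x ∈ Q} *
      Nat.card P = Nat.card {g : G // g⁻¹ * x * g ∈ P} := by
  set t : Set (G ⧸ P) := {c | x ∈ conjOfCoset P c}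
  have himage : {Q : Subgroup G | (∃ g : G, Q = P.map (MulAut.conj g).toMonoidHom) ∧ x ∈ Q} =
      conjOfCoset P '' t := by
    ext Q
    constructor
    · rintro ⟨⟨g, rfl⟩, hx⟩
      exact ⟨g, hx, rfl⟩
    · rintro ⟨⟨g⟩, hx, rfl⟩
      exact ⟨⟨g, rfl⟩, hx⟩
  have hpreimage : QuotientGroup.mk ⁻¹' t = {g : G | g⁻¹ * x * g ∈ P} :=
    Set.ext fun g => mem_map_conj_iff P g x
  calc _ = Nat.card t * Nat.card P := by
        rw [← Set.coe_ofPred, himage, Nat.card_image_of_injective (conjOfCoset_injective hP)]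
    _ = Nat.card (QuotientGroup.mk ⁻¹' t) := by
        rw [mul_comm, ← Nat.card_prod,
          Nat.card_congr (QuotientGroup.preimageMkEquivSubgroupProdSet P t)]
    _ = _ := by rw [hpreimage]; rfl

def sigmaConjMemEquiv (P : Subgroup G) (R : Set G) :
    (Σ x : R, {g : G // g⁻¹ * x * g ∈ P}) ≃ Σ p : P, {g : G // g * p * g⁻¹ ∈ R} where
  toFun := fun ⟨x, g, hg⟩ => ⟨⟨g⁻¹ * x * g, hg⟩, g, by simp [mul_assoc]⟩
  invFun := fun ⟨p, g, hg⟩ => ⟨⟨g * p * g⁻¹, hg⟩, g, by simp [mul_assoc]⟩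
  left_inv := fun ⟨x, g, hg⟩ => by
    ext
    · simp [mul_assoc]
    · rfl
  right_inv := fun ⟨p, g, hg⟩ => by
    ext
    · simp [mul_assoc]
    · rfl

theorem card_conj_mem_eq_card_centralizer {R : Set G}
    (hR : ∀ x : G, ∃! y : G, y ∈ R ∧ IsConj x y) (p : G) :
    Nat.card {g : G // g * p * g⁻¹ ∈ R} = Nat.card (centralizer {p}) := by
  obtain ⟨_, ⟨hyR, hpy⟩, huniq⟩ := hR p
  obtain ⟨c, rfl⟩ := isConj_iff.1 hpy
  refine Nat.card_congr (Equiv.subtypeEquiv (Equiv.mulLeft c⁻¹) fun g => ?_)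
  have hmem : g * p * g⁻¹ ∈ R ↔ g * p * g⁻¹ = c * p * c⁻¹ :=
    ⟨fun h => huniq _ ⟨h, isConj_iff.2 ⟨g, rfl⟩⟩, fun h => h ▸ hyR⟩
  rw [hmem, mem_centralizer_singleton_iff, Equiv.coe_mulLeft, mul_inv_eq_iff_eq_mul,
    ← mul_right_inj c⁻¹]
  simp only [mul_assoc, inv_mul_cancel_left]

theorem card_sigma_centralizer_eq_sum [Finite G] (P : Subgroup G) {R : Finset G}
    (hR : ∀ x : G, ∃! y : G, y ∈ R ∧ IsConj x y) :
    Nat.card (Σ p : P, centralizer {(p : G)}) = ∑ x ∈ R, Nat.card {g : G // g⁻¹ * x * g ∈ P} :=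
  calc _ = Nat.card (Σ p : P, {g : G // g * p * g⁻¹ ∈ (R : Set G)}) := by
        have := Fintype.ofFinite P
        simp only [Nat.card_sigma, card_conj_mem_eq_card_centralizer hR]
    _ = Nat.card (Σ x : (R : Set G), {g : G // g⁻¹ * x * g ∈ P}) :=
        Nat.card_congr (sigmaConjMemEquiv P R).symm
    _ = _ := by
        rw [Nat.card_sigma]
        exact Finset.sum_coe_sort R fun x => Nat.card {g : G // g⁻¹ * x * g ∈ P}

end Subgroup

theorem stmt3_general {G : Type*} [Group G] [Fintype G] (P : Subgroup G)
    (hP : Subgroup.normalizer (P : Set G) = P) (R : Finset G)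
    (hR : ∀ x : G, ∃! y : G, y ∈ R ∧ IsConj x y) :
    Nat.card {O : Set G // ∃ x : G, O = {y : G | ∃ p ∈ P, y = p * x * p⁻¹}} =
      ∑ x ∈ R, Nat.card {Q : Subgroup G //
        (∃ g : G, Q = Subgroup.map (MulAut.conj g).toMonoidHom P) ∧ x ∈ Q} := by
  apply Nat.eq_of_mul_eq_mul_right (Nat.card_pos (α := P))
  rw [P.card_conj_orbits_mul_card, P.card_sigma_centralizer_eq_sum hR, Finset.sum_mul]
  exact Finset.sum_congr rfl fun x _ => (Subgroup.card_conjugates_containing_mul_card hP x).symm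

/-- Let `G` be a finite group and `P` a self-normalizing subgroup. For `x ∈ G` let `f x`
be the number of `G`-conjugates of `P` containing `x`. Then the number of orbits of `P`
acting on `G` by conjugation equals the sum of `f x` over a set `R` of representatives of
the conjugacy classes of `G`. -/
theorem stmt3 {G : Type*} [Group G] [Fintype G] [DecidableEq G] (P : Subgroup G)
    (hP : Subgroup.normalizer (P : Set G) = P) (R : Finset G)
    (hR : ∀ x : G, ∃! y : G, y ∈ R ∧ IsConj x y) :
    Nat.card {O : Set G // ∃ x : G, O = {y : G | ∃ p ∈ P, y = p * x * p⁻¹}} =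
      ∑ x ∈ R, Nat.card {Q : Subgroup G //
        (∃ g : G, Q = Subgroup.map (MulAut.conj g).toMonoidHom P) ∧ x ∈ Q} :=
  stmt3_general P hP R hR
end

section
/- Let F be a field, n a positive integer, and d = (d_1, …, d_t) an n-dimension vector. Let P be the subgroup of GL_n(F) consisting of all g that stabilize the standard flag of type d (g V_i = V_i for every i). Then P is self-normalizing in GL_n(F): N_{GL_n(F)}(P) = P. -/
open scoped MatrixGroups

/-- The subspace of `Fin n → F` spanned by the first `k` standard basis vectors. -/
def stdSub (F : Type*) [Field F] (n k : ℕ) : Submodule F (Fin n → F) where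
  carrier := {v | ∀ j : Fin n, k ≤ (j : ℕ) → v j = 0}
  add_mem' := by
    intro a b ha hb j hj
    have h1 := ha j hj
    have h2 := hb j hj
    simp_all [Pi.add_apply]
  zero_mem' := by intro j hj; rfl
  smul_mem' := by
    intro c a ha j hj
    have h1 := ha j hj
    simp_all [Pi.smul_apply]

/-- The parabolic subgroup of `GL n F` stabilizing the standard flag of type `d`. -/
def parabolic (F : Type*) [Field F] (n : ℕ) {t : ℕ} (d : Fin t → ℕ) :
    Subgroup (GL (Fin n) F) where
  carrier := {g | ∀ i : Fin t,
    (stdSub F n (d i)).map (Matrix.mulVecLin ((g : Matrix (Fin n) (Fin n) F))) = stdSub F n (d i)}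
  one_mem' := by
    intro i
    simp [Units.val_one, Matrix.mulVecLin_one, Submodule.map_id]
  mul_mem' := by
    intro a b ha hb i
    rw [Units.val_mul, Matrix.mulVecLin_mul, Submodule.map_comp, hb i, ha i]
  inv_mem' := by
    intro a ha i
    conv_lhs => rw [← ha i]
    rw [← Submodule.map_comp, ← Matrix.mulVecLin_mul, ← Units.val_mul, inv_mul_cancel,
      Units.val_one, Matrix.mulVecLin_one, Submodule.map_id]

/-!
If `g` normalizes `P`, then each `g V_i` is stable under `P`, in particular under the upper
unitriangular transvections. A subspace `W` stable under those is a standard subspace `V_k`: if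
`m` is the last coordinate on which `W` does not vanish and `v ∈ W` has `v_m ≠ 0`, then
`(1 + c E_{jm}) v - v = c v_m e_j` puts every `e_j` with `j < m` into `W`, and then `e_m` as well,
so `W = V_{m+1}`. Since `g` preserves dimension and the standard subspaces form a chain,
`g V_i = V_i`.
-/

open Matrix Module

namespace stdSub

variable {F : Type*} [Field F] {n : ℕ}

theorem mono {k k' : ℕ} (h : k ≤ k') : stdSub F n k ≤ stdSub F n k' :=
  fun _ hv j hj => hv j (h.trans hj)

theorem eq_of_finrank_eq {k k' : ℕ} (h : finrank F (stdSub F n k) = finrank F (stdSub F n k')) :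
    stdSub F n k = stdSub F n k' := by
  rcases le_total k k' with hk | hk
  · exact Submodule.eq_of_le_of_finrank_eq (mono hk) h
  · exact (Submodule.eq_of_le_of_finrank_eq (mono hk) h.symm).symm

theorem le_of_forall_single_mem {k : ℕ} {W : Submodule F (Fin n → F)}
    (h : ∀ j : Fin n, (j : ℕ) < k → ∀ c, Pi.single j c ∈ W) : stdSub F n k ≤ W := by
  intro u hu
  rw [← Finset.univ_sum_single u]
  refine W.sum_mem fun j _ => ?_
  by_cases hj : (j : ℕ) < k
  · exact h j hj (u j)
  · simp [hu j (not_lt.mp hj)]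

end stdSub

section

variable {F : Type*} [Field F] {n : ℕ}

theorem transvection_mulVec (i j : Fin n) (c : F) (v : Fin n → F) :
    transvection i j c *ᵥ v = v + Pi.single i (c * v j) := by
  rw [transvection, add_mulVec, one_mulVec, single_mulVec]
  rfl

theorem finrank_map_mulVecLin (g : GL (Fin n) F) (W : Submodule F (Fin n → F)) :
    finrank F (W.map (mulVecLin (g : Matrix (Fin n) (Fin n) F))) = finrank F W :=
  (Submodule.equivMapOfInjective _ (mulVec_injective_iff_isUnit.mpr g.isUnit) W).finrank_eq.symm

theorem mem_parabolic_of_map_stdSub_le {t : ℕ} (d : Fin t → ℕ) {g : GL (Fin n) F}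
    (h : ∀ k, (stdSub F n k).map (mulVecLin (g : Matrix (Fin n) (Fin n) F)) ≤ stdSub F n k) :
    g ∈ parabolic F n d :=
  fun _ => Submodule.eq_of_le_of_finrank_eq (h _) (finrank_map_mulVecLin g _)

def transvectionGL {i j : Fin n} (hij : i < j) (c : F) : GL (Fin n) F :=
  GeneralLinearGroup.mkOfDetNeZero (transvection i j c) <| by
    simp [det_transvection_of_ne _ _ hij.ne]

theorem transvectionGL_mem_parabolic {t : ℕ} (d : Fin t → ℕ) {i j : Fin n} (hij : i < j)
    (c : F) :
    transvectionGL hij c ∈ parabolic F n d := by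
  refine mem_parabolic_of_map_stdSub_le d fun k => ?_
  rintro _ ⟨v, hv, rfl⟩ x hx
  change (transvection i j c *ᵥ v) x = 0
  rw [transvection_mulVec]
  by_cases hxi : x = i
  · subst hxi
    simp [hv _ hx, hv j (hx.trans hij.le)]
  · simp [hv _ hx, hxi]

def UpperTransvectionStable (W : Submodule F (Fin n → F)) : Prop :=
  ∀ i j : Fin n, i < j → ∀ c : F, ∀ v ∈ W, transvection i j c *ᵥ v ∈ W

theorem UpperTransvectionStable.single_mem {W : Submodule F (Fin n → F)}
    (hW : UpperTransvectionStable W) {v : Fin n → F} (hv : v ∈ W) {i j : Fin n} (hij : i < j)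
    (hvj : v j ≠ 0) (c : F) : Pi.single i c ∈ W := by
  simpa [transvection_mulVec, hvj] using W.sub_mem (hW i j hij (c / v j) v hv) hv

theorem UpperTransvectionStable.stdSub_succ_le {W : Submodule F (Fin n → F)}
    (hW : UpperTransvectionStable W) {v : Fin n → F} (hv : v ∈ W) {j : Fin n}
    (hvS : v ∈ stdSub F n (j + 1)) (hvj : v j ≠ 0) : stdSub F n (j + 1) ≤ W := by
  have hlow : stdSub F n j ≤ W := stdSub.le_of_forall_single_mem fun i hi =>
    hW.single_mem hv (Fin.lt_def.mpr hi) hvj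
  intro u hu
  have hrest : u - (u j / v j) • v ∈ stdSub F n j := by
    intro x hx
    rcases hx.eq_or_lt with hxj | hxj
    · simp [show x = j from Fin.ext hxj.symm, hvj]
    · simp [hu x hxj, hvS x hxj]
  simpa using W.add_mem (hlow hrest) (W.smul_mem (u j / v j) hv)

theorem UpperTransvectionStable.exists_eq_stdSub {W : Submodule F (Fin n → F)}
    (hW : UpperTransvectionStable W) : ∃ k, W = stdSub F n k := by
  suffices ∀ k, W ≤ stdSub F n k → ∃ k', W = stdSub F n k' from
    this n fun v _ j hj => absurd j.isLt (not_lt.mpr hj)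
  intro k hWk
  induction k with
  | zero =>
    exact ⟨0, le_antisymm hWk (stdSub.le_of_forall_single_mem fun _ h => absurd h (by omega))⟩
  | succ m ih =>
    by_cases hWm : W ≤ stdSub F n m
    · exact ih hWm
    obtain ⟨v, hv, hvm⟩ := SetLike.not_le_iff_exists.mp hWm
    obtain ⟨j, hmj, hvj⟩ : ∃ j : Fin n, m ≤ j ∧ v j ≠ 0 := by simpa [stdSub] using hvm
    have hjm : (j : ℕ) = m := le_antisymm (by by_contra h; exact hvj (hWk hv j (by omega))) hmj
    subst hjm
    exact ⟨j + 1, le_antisymm hWk (hW.stdSub_succ_le hv (hWk hv) hvj)⟩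

theorem upperTransvectionStable_map_of_mem_normalizer {t : ℕ} {d : Fin t → ℕ}
    {g : GL (Fin n) F}
    (hg : g ∈ Subgroup.normalizer (parabolic F n d : Set (GL (Fin n) F))) (i : Fin t) :
    UpperTransvectionStable
      ((stdSub F n (d i)).map (mulVecLin (g : Matrix (Fin n) (Fin n) F))) := by
  rintro a b hab c _ ⟨x, hx, rfl⟩
  have hconj : g⁻¹ * transvectionGL hab c * g ∈ parabolic F n d :=
    (Subgroup.mem_normalizer_iff''.mp hg _).mp (transvectionGL_mem_parabolic d hab c)
  refine ⟨_, hconj i ▸ Submodule.mem_map_of_mem hx, ?_⟩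
  simp [mulVec_mulVec, ← mul_assoc, transvectionGL]

end

theorem stmt4_general (F : Type*) [Field F] (n t : ℕ) (d : Fin (t + 1) → ℕ) :
    Subgroup.normalizer (parabolic F n d : Set (GL (Fin n) F)) = parabolic F n d := by
  refine le_antisymm (fun g hg i => ?_) Subgroup.le_normalizer
  obtain ⟨k, hk⟩ := (upperTransvectionStable_map_of_mem_normalizer hg i).exists_eq_stdSub
  have hdim := finrank_map_mulVecLin g (stdSub F n (d i))
  rw [hk] at hdim ⊢
  exact stdSub.eq_of_finrank_eq hdim

/-- The parabolic subgroup `P` of `GL_n(F)` stabilizing the standard flag of type `d` is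
self-normalizing: `N_{GL_n(F)}(P) = P`. -/
theorem stmt4 (F : Type*) [Field F] (n t : ℕ) (hn : 0 < n) (d : Fin (t + 1) → ℕ)
    (hmono : StrictMono d) (hpos : 0 < d 0) (hlast : d (Fin.last t) = n) :
    Subgroup.normalizer (parabolic F n d : Set (GL (Fin n) F)) = parabolic F n d :=
  stmt4_general F n t d
end

section
/- For every prime power q, let B be the subgroup of GL_2(q) consisting of the invertible upper triangular 2×2 matrices. Then the number of orbits of the action of B on GL_2(q) by conjugation equals 2q(q − 1). -/
/-!
An element `g` of `GL₂(F)` stays upper triangular or not under conjugation by the Borel subgroup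
`B`, so the orbits split into two families. Outside `B`, conjugating by `!![c, d; 0, 1]` (with
`c = g₁₀ ≠ 0`) turns `g` into the companion matrix of its characteristic polynomial, so the orbit
is determined by `(trace g, det g)`: `q (q - 1)` orbits. Inside `B`, the diagonal is a
homomorphism to the abelian torus and hence a conjugation invariant, as is being scalar; `g` is
`B`-conjugate to `diag(a, d)` unless `a = d` and `g` is not scalar, when it is conjugate to the
Jordan block `!![a, 1; 0, a]`: `(q - 1)² + (q - 1)` orbits. In total
`(q - 1)² + (q - 1) + q (q - 1) = 2 q (q - 1)`.
-/

open scoped MatrixGroups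

/-- The number of orbits of a subset `P` of a group `G` acting on `G` by conjugation,
counted as the number of distinct conjugation orbits `{p * x * p⁻¹ : p ∈ P}`. -/
noncomputable def numConjOrbits {G : Type*} [Group G] (P : Set G) : ℕ :=
  Nat.card {O : Set G // ∃ x : G, O = {y : G | ∃ p ∈ P, y = p * x * p⁻¹}}

theorem numConjOrbits_eq_card_of_complete_invariant {G α : Type*} [Group G] {P : Set G}
    (f : G → α) (hf : Function.Surjective f)
    (hP : ∀ x y, (∃ p ∈ P, y = p * x * p⁻¹) ↔ f y = f x) :
    numConjOrbits P = Nat.card α := by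
  have horbit (x : G) : {y | ∃ p ∈ P, y = p * x * p⁻¹} = f ⁻¹' {f x} := Set.ext (hP x)
  let e (a : α) : {O : Set G // ∃ x, O = {y | ∃ p ∈ P, y = p * x * p⁻¹}} :=
    ⟨f ⁻¹' {a}, by obtain ⟨x, rfl⟩ := hf a; exact ⟨x, (horbit x).symm⟩⟩
  have he : Function.Bijective e := by
    refine ⟨fun a b hab => ?_, ?_⟩
    · exact Set.singleton_injective (hf.preimage_injective (congrArg Subtype.val hab))
    · rintro ⟨O, x, rfl⟩
      exact ⟨f x, Subtype.ext (horbit x).symm⟩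
  exact (Nat.card_congr (Equiv.ofBijective e he)).symm

theorem MonoidHom.map_conj_of_commMonoid {G M : Type*} [Group G] [CommMonoid M] (f : G →* M)
    (p g : G) : f (p * g * p⁻¹) = f g := by
  rw [map_mul, map_mul, mul_right_comm, ← map_mul, mul_inv_cancel, map_one, one_mul]

theorem Subgroup.Normal.conj_mem_iff {G : Type*} [Group G] {N : Subgroup G} (hN : N.Normal)
    (p g : G) : p * g * p⁻¹ ∈ N ↔ g ∈ N :=
  ⟨fun h => by simpa [mul_assoc] using hN.conj_mem _ h p⁻¹, fun h => hN.conj_mem g h p⟩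

theorem Units.conj_eq_iff_val {M : Type*} [Monoid M] {p g m : Mˣ} :
    p * g * p⁻¹ = m ↔ p.val * g.val = m.val * p.val := by
  rw [_root_.mul_inv_eq_iff_eq_mul, Units.ext_iff, Units.val_mul, Units.val_mul]

namespace Matrix

theorem IsUpperTriangular.mul_apply_self {n R : Type*} [Fintype n] [LinearOrder n]
    [NonUnitalNonAssocSemiring R] {M N : Matrix n n R} (hM : M.IsUpperTriangular)
    (hN : N.IsUpperTriangular) (i : n) : (M * N) i i = M i i * N i i := by
  rw [mul_apply]
  refine Finset.sum_eq_single i (fun k _ hki => ?_) (by simp)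
  rcases hki.lt_or_gt with hk | hk
  · rw [hM hk, zero_mul]
  · rw [hN hk, mul_zero]

namespace GeneralLinearGroup

section UpperTriangular

variable (n R : Type*) [Fintype n] [DecidableEq n] [LinearOrder n] [CommRing R]

def upperTriangular : Subgroup (GL n R) where
  carrier := {g | g.val.IsUpperTriangular}
  one_mem' := blockTriangular_one
  mul_mem' := BlockTriangular.mul
  inv_mem' {g} hg := by
    rw [Set.mem_ofPred_eq, coe_units_inv]
    exact blockTriangular_inv_of_blockTriangular hg

variable {n R}

def upperTriangularDiag : upperTriangular n R →* (n → Rˣ) where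
  toFun g i :=
    { val := g.1.val i i
      inv := (g⁻¹).1.val i i
      val_inv := by
        rw [← IsUpperTriangular.mul_apply_self g.2 (g⁻¹).2, ← Units.val_mul, ← Subgroup.coe_mul,
          mul_inv_cancel]
        simp
      inv_val := by
        rw [← IsUpperTriangular.mul_apply_self (g⁻¹).2 g.2, ← Units.val_mul, ← Subgroup.coe_mul,
          inv_mul_cancel]
        simp }
  map_one' := by ext; simp
  map_mul' g h := by
    ext i
    exact IsUpperTriangular.mul_apply_self g.2 h.2 i

@[simp]
theorem val_upperTriangularDiag_apply (g : upperTriangular n R) (i : n) :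
    (upperTriangularDiag g i : R) = g.1.val i i := rfl

end UpperTriangular

section FinTwo

variable {R : Type*} [CommRing R]

theorem mem_upperTriangular_fin_two_iff {g : GL (Fin 2) R} :
    g ∈ upperTriangular (Fin 2) R ↔ g.val 1 0 = 0 :=
  ⟨fun h => h (show (0 : Fin 2) < 1 by decide), fun h i j hij => by
    fin_cases i <;> fin_cases j <;> simp_all⟩

theorem mem_center_iff_fin_two {g : GL (Fin 2) R} :
    g ∈ Subgroup.center (GL (Fin 2) R) ↔
      g.val 0 1 = 0 ∧ g.val 1 0 = 0 ∧ g.val 0 0 = g.val 1 1 := by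
  rw [mem_center_iff_val_mem_range_scalar]
  constructor
  · rintro ⟨r, hr⟩
    simp [← hr]
  · rintro ⟨h01, h10, h⟩
    refine ⟨g.val 0 0, ?_⟩
    ext i j
    fin_cases i <;> fin_cases j <;> simp [h01, h10, h]

end FinTwo

end GeneralLinearGroup

end Matrix

namespace BorelConj

open Matrix Matrix.GeneralLinearGroup

variable {F : Type*} [Field F]

/-- Labels of the `B`-orbits: the diagonal `(a, d)` of a diagonalizable or scalar triangular
element, the eigenvalue `a` of a Jordan block, and `(trace, det)` of a non-triangular element. -/
abbrev Label (F : Type*) [Field F] := (Fˣ × Fˣ) ⊕ Fˣ ⊕ (F × Fˣ)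

open Classical in
noncomputable def invariant (g : GL (Fin 2) F) : Label F :=
  if hg : g ∈ upperTriangular (Fin 2) F then
    let t := upperTriangularDiag ⟨g, hg⟩
    if t 0 = t 1 ∧ g ∉ Subgroup.center (GL (Fin 2) F) then .inr (.inl (t 0)) else .inl (t 0, t 1)
  else .inr (.inr (trace g.val, det g))

noncomputable def normalForm : Label F → GL (Fin 2) F
  | .inl (a, d) => mkOfDetNeZero !![(a : F), 0; 0, d] (by simp [det_fin_two_of])
  | .inr (.inl a) => mkOfDetNeZero !![(a : F), 1; 0, a] (by simp [det_fin_two_of])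
  | .inr (.inr (t, e)) => mkOfDetNeZero !![t, -e; 1, 0] (by simp [det_fin_two_of])

theorem invariant_normalForm (x : Label F) : invariant (normalForm x) = x := by
  rcases x with ⟨a, d⟩ | a | ⟨t, e⟩
  · have hmem : normalForm (.inl (a, d)) ∈ upperTriangular (Fin 2) F := by
      simp [mem_upperTriangular_fin_two_iff, normalForm]
    rw [invariant, dif_pos hmem]
    simp [mem_center_iff_fin_two, normalForm, Units.ext_iff]
  · have hmem : normalForm (.inr (.inl a)) ∈ upperTriangular (Fin 2) F := by
      simp [mem_upperTriangular_fin_two_iff, normalForm]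
    rw [invariant, dif_pos hmem]
    simp [mem_center_iff_fin_two, normalForm, Units.ext_iff]
  · have hmem : normalForm (.inr (.inr (t, e))) ∉ upperTriangular (Fin 2) F := by
      simp [mem_upperTriangular_fin_two_iff, normalForm]
    rw [invariant, dif_neg hmem]
    simp [normalForm, Units.ext_iff, trace_fin_two_of, det_fin_two_of]

theorem invariant_conj {p : GL (Fin 2) F} (hp : p ∈ upperTriangular (Fin 2) F)
    (g : GL (Fin 2) F) : invariant (p * g * p⁻¹) = invariant g := by
  by_cases hg : g ∈ upperTriangular (Fin 2) F
  · have hg' : p * g * p⁻¹ ∈ upperTriangular (Fin 2) F :=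
      mul_mem (mul_mem hp hg) (inv_mem hp)
    have hdiag : upperTriangularDiag ⟨p * g * p⁻¹, hg'⟩ = upperTriangularDiag ⟨g, hg⟩ := by
      rw [show (⟨p * g * p⁻¹, hg'⟩ : upperTriangular (Fin 2) F) = ⟨p, hp⟩ * ⟨g, hg⟩ * ⟨p, hp⟩⁻¹
        from Subtype.ext rfl, MonoidHom.map_conj_of_commMonoid]
    rw [invariant, invariant, dif_pos hg, dif_pos hg', hdiag]
    classical
    simp only [Subgroup.Normal.conj_mem_iff inferInstance]
  · have hg' : p * g * p⁻¹ ∉ upperTriangular (Fin 2) F := by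
      rwa [Subgroup.mul_mem_cancel_right _ (inv_mem hp), Subgroup.mul_mem_cancel_left _ hp]
    have htrace : trace (p * g * p⁻¹).val = trace g.val := by
      rw [Units.val_mul, Units.val_mul, coe_units_inv, trace_conj p.isUnit]
    simp only [invariant, dif_neg hg, dif_neg hg', htrace, MonoidHom.map_conj_of_commMonoid]

theorem exists_conj_companion {g : GL (Fin 2) F} (hg : g ∉ upperTriangular (Fin 2) F) :
    ∃ p ∈ upperTriangular (Fin 2) F,
      p * g * p⁻¹ = normalForm (.inr (.inr (trace g.val, det g))) := by
  rw [mem_upperTriangular_fin_two_iff] at hg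
  refine ⟨mkOfDetNeZero !![g.val 1 0, g.val 1 1; 0, 1] (by simpa [det_fin_two_of]),
    by simp [mem_upperTriangular_fin_two_iff], Units.conj_eq_iff_val.2 ?_⟩
  ext i j
  fin_cases i <;> fin_cases j <;> simp [normalForm, mul_apply, trace_fin_two, det_fin_two] <;> ring

theorem exists_conj_diagonal {g : GL (Fin 2) F} (hg : g ∈ upperTriangular (Fin 2) F)
    (h : g.val 0 0 ≠ g.val 1 1 ∨ g.val 0 1 = 0) :
    ∃ p ∈ upperTriangular (Fin 2) F, p * g * p⁻¹ =
      normalForm (.inl (upperTriangularDiag ⟨g, hg⟩ 0, upperTriangularDiag ⟨g, hg⟩ 1)) := by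
  -- for a scalar `g` the shear below is `1`, since then `b / (a - d) = 0 / 0 = 0`
  have hs : g.val 0 1 / (g.val 0 0 - g.val 1 1) * (g.val 0 0 - g.val 1 1) = g.val 0 1 := by
    rcases h with h | h
    · exact div_mul_cancel₀ _ (sub_ne_zero.2 h)
    · simp [h]
  refine ⟨mkOfDetNeZero !![1, g.val 0 1 / (g.val 0 0 - g.val 1 1); 0, 1]
    (by simp [det_fin_two_of]), by simp [mem_upperTriangular_fin_two_iff],
    Units.conj_eq_iff_val.2 ?_⟩
  rw [mem_upperTriangular_fin_two_iff] at hg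
  ext i j
  fin_cases i <;> fin_cases j <;> simp [normalForm, mul_apply, hg]
  linear_combination -hs

theorem exists_conj_jordan {g : GL (Fin 2) F} (hg : g ∈ upperTriangular (Fin 2) F)
    (had : g.val 0 0 = g.val 1 1) (hb : g.val 0 1 ≠ 0) :
    ∃ p ∈ upperTriangular (Fin 2) F,
      p * g * p⁻¹ = normalForm (.inr (.inl (upperTriangularDiag ⟨g, hg⟩ 0))) := by
  refine ⟨mkOfDetNeZero !![1, 0; 0, g.val 0 1] (by simpa [det_fin_two_of]),
    by simp [mem_upperTriangular_fin_two_iff], Units.conj_eq_iff_val.2 ?_⟩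
  rw [mem_upperTriangular_fin_two_iff] at hg
  ext i j
  fin_cases i <;> fin_cases j <;> simp [normalForm, mul_apply, hg, had, mul_comm]

theorem exists_conj_normalForm (g : GL (Fin 2) F) :
    ∃ p ∈ upperTriangular (Fin 2) F, p * g * p⁻¹ = normalForm (invariant g) := by
  by_cases hg : g ∈ upperTriangular (Fin 2) F
  · rw [invariant, dif_pos hg]
    dsimp only
    split_ifs with hjordan
    · have had : g.val 0 0 = g.val 1 1 := by simpa [Units.ext_iff] using hjordan.1
      refine exists_conj_jordan hg had fun hb => hjordan.2 ?_
      exact mem_center_iff_fin_two.2 ⟨hb, mem_upperTriangular_fin_two_iff.1 hg, had⟩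
    · refine exists_conj_diagonal hg (or_iff_not_imp_left.2 fun had => ?_)
      exact (mem_center_iff_fin_two.1
        (not_and_not_right.1 hjordan (Units.ext (not_not.1 had)))).1
  · rw [invariant, dif_neg hg]
    exact exists_conj_companion hg

theorem conj_iff_invariant_eq (g h : GL (Fin 2) F) :
    (∃ p ∈ upperTriangular (Fin 2) F, h = p * g * p⁻¹) ↔ invariant h = invariant g := by
  constructor
  · rintro ⟨p, hp, rfl⟩
    exact invariant_conj hp g
  · intro hgh
    obtain ⟨p, hp, hpg⟩ := exists_conj_normalForm g
    obtain ⟨r, hr, hrh⟩ := exists_conj_normalForm h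
    rw [hgh, ← hpg] at hrh
    refine ⟨r⁻¹ * p, mul_mem (inv_mem hr) hp, ?_⟩
    calc h = r⁻¹ * (r * h * r⁻¹) * r := by group
      _ = r⁻¹ * p * g * (r⁻¹ * p)⁻¹ := by rw [hrh]; group

theorem card_label [Finite F] : Nat.card (Label F) = 2 * Nat.card F * (Nat.card F - 1) := by
  have : 1 ≤ Nat.card F := Nat.card_pos
  simp only [Nat.card_sum, Nat.card_prod, Nat.card_units]
  zify [this]
  ring

end BorelConj

open BorelConj Matrix.GeneralLinearGroup in
theorem stmt11_general (q : ℕ) (F : Type) [Field F] [Fintype F]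
    (hF : Fintype.card F = q) :
    numConjOrbits {g : GL (Fin 2) F |
        ∀ i j : Fin 2, j < i → (g : Matrix (Fin 2) (Fin 2) F) i j = 0} =
      2 * q * (q - 1) := by
  calc numConjOrbits _ = Nat.card (Label F) :=
        numConjOrbits_eq_card_of_complete_invariant (P := upperTriangular (Fin 2) F) invariant
          (Function.LeftInverse.surjective invariant_normalForm) conj_iff_invariant_eq
    _ = 2 * q * (q - 1) := by rw [card_label, Nat.card_eq_fintype_card, hF]

/-- The number of orbits of the Borel subgroup `B` of invertible upper triangular matrices
acting on `GL_2(q)` by conjugation is `2q(q - 1)`. -/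
theorem stmt11 (q : ℕ) (hq : IsPrimePow q) (F : Type) [Field F] [Fintype F]
    (hF : Fintype.card F = q) :
    numConjOrbits {g : GL (Fin 2) F |
        ∀ i j : Fin 2, j < i → (g : Matrix (Fin 2) (Fin 2) F) i j = 0} =
      2 * q * (q - 1) :=
  stmt11_general q F hF
end

section
/- Let F be a field, let V and W be finite-dimensional F-vector spaces, and let x be an invertible linear endomorphism of V ⊕ W with x(V) = V and x(W) = W. Suppose the characteristic polynomial of the restriction of x to V and the characteristic polynomial of the restriction of x to W are coprime in F[X]. Then every x-invariant subspace U of V ⊕ W decomposes as U = (U ∩ V) ⊕ (U ∩ W). -/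
/-!
If `p` and `q` are coprime with `p(x)` killing `V` and `q(x)` killing `W` (Cayley–Hamilton for the
restrictions), write `1 = a p + b q`. For `u ∈ U`, the vector `a(x) p(x) u` lies in `U` and, since
`p(x)` kills the `V`-component of `u`, also in `W`; likewise `b(x) q(x) u ∈ U ∩ V`. Their sum is `u`.
-/

open Polynomial

namespace Module.End

variable {R M : Type*} [CommRing R] [AddCommGroup M] [Module R M]

lemma aeval_restrict_apply (f : End R M) {S : Submodule R M} (hS : ∀ v ∈ S, f v ∈ S)
    (p : R[X]) (v : S) : (aeval (f.restrict hS) p v : M) = aeval f p v := by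
  induction p using Polynomial.induction_on' with
  | add p q hp hq => simp [hp, hq]
  | monomial n a => simp [aeval_monomial, pow_restrict n hS, LinearMap.restrict_apply]

lemma le_ker_aeval_charpoly_restrict (f : End R M) {S : Submodule R M}
    [Module.Free R S] [Module.Finite R S] (hS : ∀ v ∈ S, f v ∈ S) :
    S ≤ LinearMap.ker (aeval f (f.restrict hS).charpoly) := fun v hv => by
  rw [LinearMap.mem_ker, ← aeval_restrict_apply f hS _ ⟨v, hv⟩, LinearMap.aeval_self_charpoly]
  rfl

lemma range_aeval_le_of_sup_eq_top {f : End R M} {S T : Submodule R M} (hST : S ⊔ T = ⊤)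
    (hT : ∀ v ∈ T, f v ∈ T) {p : R[X]} (hp : S ≤ LinearMap.ker (aeval f p)) :
    LinearMap.range (aeval f p) ≤ T := by
  rw [LinearMap.range_eq_map, ← hST, Submodule.map_sup]
  refine sup_le ?_ ?_
  · rintro _ ⟨s, hs, rfl⟩
    rw [LinearMap.mem_ker.1 (hp hs)]
    exact T.zero_mem
  · rintro _ ⟨t, ht, rfl⟩
    exact aeval_apply_smul_mem_of_le_comap ht p f hT

theorem eq_inf_sup_inf_of_isCoprime {f : End R M} {S T : Submodule R M} (hST : S ⊔ T = ⊤)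
    (hS : ∀ v ∈ S, f v ∈ S) (hT : ∀ v ∈ T, f v ∈ T) {p q : R[X]} (hpq : IsCoprime p q)
    (hp : S ≤ LinearMap.ker (aeval f p)) (hq : T ≤ LinearMap.ker (aeval f q))
    {U : Submodule R M} (hU : ∀ u ∈ U, f u ∈ U) :
    U = U ⊓ S ⊔ U ⊓ T := by
  refine le_antisymm (fun u hu => ?_) (sup_le inf_le_left inf_le_left)
  obtain ⟨a, b, hab⟩ := hpq
  have hU' {r : R[X]} : aeval f r u ∈ U := aeval_apply_smul_mem_of_le_comap hu r f hU
  have hT' : aeval f (a * p) u ∈ T := by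
    rw [map_mul, mul_apply]
    exact aeval_apply_smul_mem_of_le_comap
      (range_aeval_le_of_sup_eq_top hST hT hp ⟨u, rfl⟩) a f hT
  have hS' : aeval f (b * q) u ∈ S := by
    rw [map_mul, mul_apply]
    exact aeval_apply_smul_mem_of_le_comap
      (range_aeval_le_of_sup_eq_top (sup_comm S T ▸ hST) hS hq ⟨u, rfl⟩) b f hS
  have hsum : aeval f (b * q) u + aeval f (a * p) u = u := by
    rw [← LinearMap.add_apply, ← map_add, add_comm, hab, map_one, one_apply]
  exact hsum ▸ Submodule.add_mem_sup ⟨hU', hS'⟩ ⟨hU', hT'⟩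

end Module.End

theorem stmt16_general (F : Type*) [Field F] (V W : Type*)
    [AddCommGroup V] [Module F V] [AddCommGroup W] [Module F W]
    [FiniteDimensional F V] [FiniteDimensional F W]
    (x : (V × W) →ₗ[F] (V × W))
    (hVmem : ∀ v ∈ LinearMap.range (LinearMap.inl F V W),
      x v ∈ LinearMap.range (LinearMap.inl F V W))
    (hWmem : ∀ w ∈ LinearMap.range (LinearMap.inr F V W),
      x w ∈ LinearMap.range (LinearMap.inr F V W))
    (hcop : IsCoprime (LinearMap.charpoly (x.restrict hVmem))
      (LinearMap.charpoly (x.restrict hWmem)))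
    (U : Submodule F (V × W)) (hU : Submodule.map x U ≤ U) :
    U = (U ⊓ LinearMap.range (LinearMap.inl F V W)) ⊔
      (U ⊓ LinearMap.range (LinearMap.inr F V W)) :=
  Module.End.eq_inf_sup_inf_of_isCoprime LinearMap.sup_range_inl_inr hVmem hWmem hcop
    (Module.End.le_ker_aeval_charpoly_restrict x hVmem)
    (Module.End.le_ker_aeval_charpoly_restrict x hWmem)
    (fun u hu => hU ⟨u, hu, rfl⟩)

/-- Let `x` be an invertible linear endomorphism of `V ⊕ W` with `x(V) = V` and `x(W) = W`.
If the characteristic polynomials of the restrictions of `x` to `V` and to `W` are coprime,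
then every `x`-invariant subspace `U` of `V ⊕ W` decomposes as `U = (U ∩ V) ⊕ (U ∩ W)`. -/
theorem stmt16 (F : Type*) [Field F] (V W : Type*)
    [AddCommGroup V] [Module F V] [AddCommGroup W] [Module F W]
    [FiniteDimensional F V] [FiniteDimensional F W]
    (x : (V × W) →ₗ[F] (V × W)) (hx : Function.Bijective x)
    (hVmem : ∀ v ∈ LinearMap.range (LinearMap.inl F V W),
      x v ∈ LinearMap.range (LinearMap.inl F V W))
    (hWmem : ∀ w ∈ LinearMap.range (LinearMap.inr F V W),
      x w ∈ LinearMap.range (LinearMap.inr F V W))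
    (hVeq : Submodule.map x (LinearMap.range (LinearMap.inl F V W)) =
      LinearMap.range (LinearMap.inl F V W))
    (hWeq : Submodule.map x (LinearMap.range (LinearMap.inr F V W)) =
      LinearMap.range (LinearMap.inr F V W))
    (hcop : IsCoprime (LinearMap.charpoly (x.restrict hVmem))
      (LinearMap.charpoly (x.restrict hWmem)))
    (U : Submodule F (V × W)) (hU : Submodule.map x U ≤ U) :
    U = (U ⊓ LinearMap.range (LinearMap.inl F V W)) ⊔
      (U ⊓ LinearMap.range (LinearMap.inr F V W)) :=
  stmt16_general F V W x hVmem hWmem hcop U hU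
end
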